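/- Let A be a separable C*-algebra and D ⊆ A a weakly Cartan subalgebra. Then the relation ∼ on {(n, φ) : n ∈ N(D), φ ∈ supp°(n*n)}, defined by (n, φ) ∼ (m, ψ) iff φ = ψ, there is an open neighbourhood U of φ with U ⊆ supp°(n*n) ∩ supp°(m*m) on which α_n = α_m, and the unitary U^φ_{n*m} belongs to the connected component of the identity in the unitary group of D'/J_φ, is an equivalence relation. -/

import Mathlib

open WeakDual Filter Topology Classical

variable {A : Type} [NonUnitalNormedRing A] [StarRing A] [CStarRing A]
  [NormedSpace ℂ A] [IsScalarTower ℂ A A] [SMulCommClass ℂ A A] [CompleteSpace A] [StarModule ℂ A]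

/-- Evaluation of a character of `D` at an element of `A` (taken to be `0` off `D`). -/
noncomputable def evalD (D : NonUnitalStarSubalgebra ℂ A) (φ : characterSpace ℂ D) (a : A) : ℂ :=
  if h : a ∈ D then φ (⟨a, h⟩ : D) else 0

/-- The open support `supp°(a) = {φ ∈ D̂ : φ(a) ≠ 0}`. -/
def suppo (D : NonUnitalStarSubalgebra ℂ A) (a : A) : Set (characterSpace ℂ D) :=
  {φ | evalD D φ a ≠ 0}

/-- `n` is a normaliser of `D` in `A`. -/
def IsNormalizer (D : NonUnitalStarSubalgebra ℂ A) (n : A) : Prop :=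
  ∀ d ∈ D, n * d * star n ∈ D ∧ star n * d * n ∈ D

/-- `S` contains an approximate unit for `A`: there is a net in `S` converging
multiplicatively to the identity on every element of `A`. -/
def HasApproxUnit (S : Set A) : Prop :=
  ∃ (ι : Type) (l : Filter ι) (e : ι → A), l.NeBot ∧ (∀ i, e i ∈ S) ∧
    ∀ a : A, Tendsto (fun i => e i * a) l (nhds a) ∧ Tendsto (fun i => a * e i) l (nhds a)

/-- `α` is "the" homeomorphism `α_n : supp°(n*n) → supp°(nn*)` attached to a normaliser `n`,
i.e. a partial homeomorphism of `D̂` with source `supp°(n*n)`, target `supp°(nn*)`, and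
satisfying `φ(n*n)·(α_n φ)(d) = φ(n* d n)` for all `φ` in the source and `d ∈ D`. -/
def IsWeylHomeo (D : NonUnitalStarSubalgebra ℂ A) (n : A)
    (α : PartialHomeomorph (characterSpace ℂ D) (characterSpace ℂ D)) : Prop :=
  α.source = suppo D (star n * n) ∧ α.target = suppo D (n * star n) ∧
  ∀ φ ∈ α.source, ∀ d ∈ D, evalD D φ (star n * n) * evalD D (α φ) d = evalD D φ (star n * d * n)

/-- The relative commutant `D' = {a ∈ A : a d = d a for all d ∈ D}`, as a set. -/
def commutantSet (D : NonUnitalStarSubalgebra ℂ A) : Set A := {a | ∀ d ∈ D, a * d = d * a}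

/-- The ideal `J_φ ⊆ D'`: the closure of `(ker φ)·D'`. -/
noncomputable def Jset (D : NonUnitalStarSubalgebra ℂ A) (φ : characterSpace ℂ D) : Set A :=
  closure ((Submodule.span ℂ {x : A | ∃ k ∈ (D : Set A), ∃ a ∈ commutantSet D,
    evalD D φ k = 0 ∧ x = k * a} : Submodule ℂ A) : Set A)

/-- `e ∈ D'` represents the unit of `D'/J_φ`. -/
def IsUnitModJ (D : NonUnitalStarSubalgebra ℂ A) (φ : characterSpace ℂ D) (e : A) : Prop :=
  e ∈ commutantSet D ∧ ∀ a ∈ commutantSet D, e * a - a ∈ Jset D φ ∧ a * e - a ∈ Jset D φ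

/-- `D` is a weakly Cartan subalgebra of `A`. -/
def IsWeaklyCartan (D : NonUnitalStarSubalgebra ℂ A) : Prop :=
  IsClosed (D : Set A) ∧ (∀ x ∈ D, ∀ y ∈ D, x * y = y * x) ∧ HasApproxUnit (D : Set A) ∧
  (∀ φ : characterSpace ℂ D, ∃ e, IsUnitModJ D φ e) ∧
  (∀ φ : characterSpace ℂ D, ∃ d ∈ D, ∃ U : Set (characterSpace ℂ D),
    IsOpen U ∧ φ ∈ U ∧ ∀ ψ ∈ U, IsUnitModJ D ψ d)

/-- The relative commutant `D'` as a non-unital star subalgebra of `A`. -/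
def commutantAlg (D : NonUnitalStarSubalgebra ℂ A) : NonUnitalStarSubalgebra ℂ A where
  carrier := commutantSet D
  add_mem' := by
    intro a b ha hb d hd
    simp only [commutantSet, Set.mem_setOf_eq] at *
    rw [add_mul, mul_add, ha d hd, hb d hd]
  zero_mem' := by
    intro d _
    rw [zero_mul, mul_zero]
  mul_mem' := by
    intro a b ha hb d hd
    calc a * b * d = a * (b * d) := by rw [mul_assoc]
      _ = a * (d * b) := by rw [hb d hd]
      _ = a * d * b := by rw [mul_assoc]
      _ = d * a * b := by rw [ha d hd]
      _ = d * (a * b) := by rw [mul_assoc]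
  smul_mem' := by
    intro c a ha d hd
    rw [smul_mul_assoc, ha d hd, mul_smul_comm]
  star_mem' := by
    intro a ha d hd
    calc star a * d = star (star d * a) := by rw [star_mul, star_star]
      _ = star (a * star d) := by rw [← ha (star d) (star_mem hd)]
      _ = d * star a := by rw [star_mul, star_star]

/-- `w` is a representative in `A` of the unitary `U^φ_{n*m}` of `D'/J_φ`:
`w = φ(m*m)^{-1/2}·φ(n*n)^{-1/2}·(d n* m d)` for some admissible `U` and `d`. -/
noncomputable def WeylRep (D : NonUnitalStarSubalgebra ℂ A) (n m : A)
    (φ : characterSpace ℂ D) (w : A) : Prop :=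
  ∃ U : Set (characterSpace ℂ D), IsOpen U ∧ φ ∈ U ∧
    U ⊆ suppo D (star n * n) ∩ suppo D (star m * m) ∧
    (∃ αn αm : PartialHomeomorph (characterSpace ℂ D) (characterSpace ℂ D),
       IsWeylHomeo D n αn ∧ IsWeylHomeo D m αm ∧ Set.EqOn ⇑αn ⇑αm U) ∧
    ∃ d ∈ (D : Set A), suppo D d ⊆ U ∧ evalD D φ d = 1 ∧
      w = (evalD D φ (star m * m) ^ (-(1/2) : ℂ) * evalD D φ (star n * n) ^ (-(1/2) : ℂ)) •
        (d * (star n * m) * d)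

/-- The unitary `U^φ_{n*m}` of `D'/J_φ` lies in the connected component of the identity of
the unitary group of `D'/J_φ`; the quotient `D'/J_φ` is represented by an arbitrary
surjective star-homomorphism `π` from `D'` onto a unital C*-algebra `Q` with kernel `J_φ`. -/
noncomputable def InU0 (D : NonUnitalStarSubalgebra ℂ A) (n m : A)
    (φ : characterSpace ℂ D) : Prop :=
  ∀ (Q : Type) [NormedRing Q] [StarRing Q] [CStarRing Q] [NormedAlgebra ℂ Q]
    [CompleteSpace Q] [StarModule ℂ Q] (π : commutantAlg D →⋆ₙₐ[ℂ] Q),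
    Function.Surjective ⇑π →
    (∀ a : commutantAlg D, π a = 0 ↔ (a : A) ∈ Jset D φ) →
    ∃ w : commutantAlg D, WeylRep D n m φ (w : A) ∧
      ∃ hu : π w ∈ unitary Q, (⟨π w, hu⟩ : unitary Q) ∈ connectedComponent (1 : unitary Q)

/-- The relation `(n, φ) ∼ (m, ψ)` of Lemma 4.7 (for the trivial coaction). -/
noncomputable def WeylSimRaw (D : NonUnitalStarSubalgebra ℂ A) (n : A)
    (φ : characterSpace ℂ D) (m : A) (ψ : characterSpace ℂ D) : Prop :=
  φ = ψ ∧
  (∃ U : Set (characterSpace ℂ D), IsOpen U ∧ φ ∈ U ∧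
    U ⊆ suppo D (star n * n) ∩ suppo D (star m * m) ∧
    ∃ αn αm : PartialHomeomorph (characterSpace ℂ D) (characterSpace ℂ D),
      IsWeylHomeo D n αn ∧ IsWeylHomeo D m αm ∧ Set.EqOn ⇑αn ⇑αm U) ∧
  InU0 D n m φ

/-- The set of pairs `(n, φ)` with `n ∈ N(D)` and `φ ∈ supp°(n*n)`. -/
def WeylPair (D : NonUnitalStarSubalgebra ℂ A) : Type :=
  {p : A × characterSpace ℂ D // IsNormalizer D p.1 ∧ p.2 ∈ suppo D (star p.1 * p.1)}

/-!
The representatives `w = φ(m*m)^{-1/2} φ(n*n)^{-1/2} · d n* m d` behave like a cocycle in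
`D'/J_φ`: `π(U_{n*n}) = 1` and `π(U_{n*k}) = π(U_{n*m}) π(U_{m*k})`. Since the identity
component of the unitary group is a subgroup, reflexivity, symmetry (`U_{m*n} = U_{n*m}⁻¹`) and
transitivity follow. The cocycle identities hold because `D` acts on `D'/J_φ` through the scalar
`φ` (condition (iv) provides an element of `D` representing the unit) and `α_n φ = α_m φ`.

That `d n* m d` lies in `D'` when `α_n = α_m` on `supp°(d)` is the one analytic input:
`z = d n* m d` is then a normaliser whose partial homeomorphism fixes every character, so all
characters of `D` vanish on `(z d₀ - d₀ z)* (z d₀ - d₀ z) ∈ D`, which is therefore `0` by Gelfand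
duality. Reflexivity also needs `α_n` to exist: it is `φ ↦ φ(n* · n) / φ(n*n)`.
-/

set_option linter.unusedSectionVars false

theorem CommCStarAlgebra.eq_zero_of_forall_characterSpace_apply_eq_zero {B : Type*}
    [NonUnitalCommCStarAlgebra B] {x : B} (h : ∀ ψ : characterSpace ℂ B, ψ x = 0) : x = 0 := by
  open scoped CStarAlgebra in
  let f := gelfandStarTransform B⁺¹ ∘ Unitization.inrNonUnitalAlgHom ℂ B
  have hf : Isometry f := gelfandTransform_isometry _ |>.comp Unitization.isometry_inr
  refine hf.injective (ContinuousMap.ext fun χ => ?_)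
  -- a character of `B⁺¹` restricts to `B` either as a character or as zero
  let W : WeakDual ℂ B := (CharacterSpace.toCLM χ).comp
    ⟨Unitization.inrHom ℂ ℂ B, Unitization.continuous_inr⟩
  have hW : ∀ a, W a = χ (a : B⁺¹) := fun a => rfl
  suffices W x = 0 by simpa [f, hW] using this
  by_cases hW0 : W = 0
  · rw [hW0]; rfl
  · exact h ⟨W, hW0, fun a b => by simp only [hW, Unitization.inr_mul, map_mul]⟩

section Characters

variable {D : NonUnitalStarSubalgebra ℂ A} {φ ψ : characterSpace ℂ D} {a b c : A}

theorem evalD_of_mem (φ : characterSpace ℂ D) (ha : a ∈ D) : evalD D φ a = φ ⟨a, ha⟩ :=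
  dif_pos ha

theorem mem_of_evalD_ne_zero (h : evalD D φ a ≠ 0) : a ∈ D := by
  by_contra ha
  exact h (dif_neg ha)

theorem evalD_mul (ha : a ∈ D) (hb : b ∈ D) :
    evalD D φ (a * b) = evalD D φ a * evalD D φ b := by
  rw [evalD_of_mem φ ha, evalD_of_mem φ hb, evalD_of_mem φ (mul_mem ha hb)]
  exact map_mul φ ⟨a, ha⟩ ⟨b, hb⟩

theorem evalD_mul_mul (ha : a ∈ D) (hb : b ∈ D) (hc : c ∈ D) :
    evalD D φ (a * b * c) = evalD D φ a * evalD D φ b * evalD D φ c := by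
  rw [evalD_mul (mul_mem ha hb) hc, evalD_mul ha hb]

theorem evalD_smul (z : ℂ) (ha : a ∈ D) : evalD D φ (z • a) = z * evalD D φ a := by
  rw [evalD_of_mem φ ha, evalD_of_mem φ (SMulMemClass.smul_mem z ha)]
  exact map_smul φ z ⟨a, ha⟩

theorem evalD_sub (ha : a ∈ D) (hb : b ∈ D) :
    evalD D φ (a - b) = evalD D φ a - evalD D φ b := by
  rw [evalD_of_mem φ ha, evalD_of_mem φ hb, evalD_of_mem φ (sub_mem ha hb)]
  exact map_sub φ ⟨a, ha⟩ ⟨b, hb⟩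

theorem characterSpace_ext_evalD (h : ∀ x ∈ D, evalD D φ x = evalD D ψ x) : φ = ψ :=
  CharacterSpace.ext fun x => by simpa only [evalD_of_mem _ x.2] using h x x.2

theorem continuous_evalD (a : A) : Continuous fun φ : characterSpace ℂ D => evalD D φ a := by
  by_cases ha : a ∈ D
  · simp only [evalD_of_mem _ ha]
    exact (WeakDual.eval_continuous _).comp continuous_subtype_val
  · simp only [evalD, dif_neg ha]
    exact continuous_const

theorem isOpen_suppo (a : A) : IsOpen (suppo D a) :=
  isOpen_compl_singleton.preimage (continuous_evalD a)

theorem suppo_mul_subset (ha : a ∈ D) (hb : b ∈ D) : suppo D (a * b) ⊆ suppo D a ∩ suppo D b :=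
  fun ψ (hψ : evalD D ψ (a * b) ≠ 0) => by
    rw [evalD_mul ha hb] at hψ
    exact ⟨left_ne_zero_of_mul hψ, right_ne_zero_of_mul hψ⟩

theorem eq_zero_of_forall_evalD_eq_zero (hcl : IsClosed (D : Set A))
    (habel : ∀ x ∈ D, ∀ y ∈ D, x * y = y * x) (ha : a ∈ D) (h : ∀ ψ, evalD D ψ a = 0) :
    a = 0 := by
  let _ : NonUnitalCStarAlgebra A := {}
  have _ : IsClosed (D : Set A) := hcl
  let _ : NonUnitalCommCStarAlgebra D :=
    { NonUnitalStarSubalgebra.nonUnitalCStarAlgebra D with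
      mul_comm := fun x y => Subtype.ext (habel _ x.2 _ y.2) }
  have : (⟨a, ha⟩ : D) = 0 :=
    CommCStarAlgebra.eq_zero_of_forall_characterSpace_apply_eq_zero fun ψ => by
      rw [← evalD_of_mem ψ ha, h]
  exact congrArg Subtype.val this

end Characters

section Normalizers

variable {D : NonUnitalStarSubalgebra ℂ A} {n : A}

theorem isNormalizer_star (hn : IsNormalizer D n) : IsNormalizer D (star n) := fun d hd => by
  simpa only [star_star, and_comm] using hn d hd

theorem IsNormalizer.mul_star_mem (hcl : IsClosed (D : Set A)) (hau : HasApproxUnit (D : Set A))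
    (hn : IsNormalizer D n) : n * star n ∈ D := by
  obtain ⟨ι, l, e, hl, he, hconv⟩ := hau
  have : Tendsto (fun i => n * e i * star n) l (𝓝 (n * star n)) := by
    simpa only [mul_assoc] using (hconv (star n)).1.const_mul n
  exact hcl.mem_of_tendsto this (Eventually.of_forall fun i => (hn (e i) (he i)).1)

theorem conj_mul_conj (habel : ∀ x ∈ D, ∀ y ∈ D, x * y = y * x)
    (hnn' : n * star n ∈ D) (g : A) {h : A} (hh : h ∈ D) :
    (star n * g * n) * (star n * h * n) = star n * (g * h) * n * (star n * n) := by
  have : n * star n * h = h * (n * star n) := habel _ hnn' _ hh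
  calc (star n * g * n) * (star n * h * n) = star n * g * (n * star n * h) * n := by
        simp only [mul_assoc]
    _ = star n * (g * h) * n * (star n * n) := by rw [this]; simp only [mul_assoc]

end Normalizers

section WeylHomeo

variable {D : NonUnitalStarSubalgebra ℂ A} {n : A} (hn : IsNormalizer D n)
  {φ : characterSpace ℂ D}

noncomputable def IsNormalizer.conjCLM : D →L[ℂ] D :=
  LinearMap.mkContinuous
    { toFun := fun g => ⟨star n * g * n, (hn g g.2).2⟩
      map_add' := fun g h => Subtype.ext (by simp only [D.coe_add, mul_add, add_mul])
      map_smul' := fun z g => Subtype.ext (by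
        simp only [D.coe_smul, mul_smul_comm, smul_mul_assoc, RingHom.id_apply]) }
    (‖star n‖ * ‖n‖) fun g => by
      simp only [LinearMap.coe_mk, AddHom.coe_mk]
      calc ‖star n * g * n‖ ≤ ‖star n‖ * ‖(g : A)‖ * ‖n‖ :=
            (norm_mul_le _ _).trans (by gcongr; exact norm_mul_le _ _)
        _ = ‖star n‖ * ‖n‖ * ‖(g : A)‖ := by ring

noncomputable def IsNormalizer.weylFunctional (φ : characterSpace ℂ D) : WeakDual ℂ D :=
  (evalD D φ (star n * n))⁻¹ • (CharacterSpace.toCLM φ).comp hn.conjCLM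

theorem IsNormalizer.weylFunctional_apply (g : D) :
    hn.weylFunctional φ g = (evalD D φ (star n * n))⁻¹ * evalD D φ (star n * g * n) := by
  rw [evalD_of_mem φ (hn g g.2).2]
  rfl

theorem IsNormalizer.weylFunctional_mem_characterSpace
    (habel : ∀ x ∈ D, ∀ y ∈ D, x * y = y * x) (hnn' : n * star n ∈ D)
    (hφ : evalD D φ (star n * n) ≠ 0) : hn.weylFunctional φ ∈ characterSpace ℂ D := by
  have hnn : star n * n ∈ D := mem_of_evalD_ne_zero hφ
  refine ⟨fun h0 => ?_, fun g h => ?_⟩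
  · have h1 := hn.weylFunctional_apply (φ := φ) ⟨n * star n, hnn'⟩
    have h2 : star n * (n * star n) * n = star n * n * (star n * n) := by simp only [mul_assoc]
    rw [h0, show (0 : WeakDual ℂ D) ⟨n * star n, hnn'⟩ = 0 from rfl] at h1
    simp only [h2, evalD_mul hnn hnn, inv_mul_cancel_left₀ hφ] at h1
    exact hφ h1.symm
  · have key : evalD D φ (star n * g * n) * evalD D φ (star n * h * n)
        = evalD D φ (star n * (g * h) * n) * evalD D φ (star n * n) := by
      rw [← evalD_mul (hn g g.2).2 (hn h h.2).2, conj_mul_conj habel hnn' _ h.2,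
        evalD_mul (hn _ (mul_mem g.2 h.2)).2 hnn]
    simp only [hn.weylFunctional_apply, D.coe_mul]
    field_simp
    linear_combination -key

noncomputable def IsNormalizer.weylMap (φ : characterSpace ℂ D) : characterSpace ℂ D :=
  if h : hn.weylFunctional φ ∈ characterSpace ℂ D then ⟨_, h⟩ else φ

theorem IsNormalizer.weylMap_congr {m : A} (hm : IsNormalizer D m) (h : n = m) :
    hn.weylMap = hm.weylMap := by
  subst h; rfl

variable (habel : ∀ x ∈ D, ∀ y ∈ D, x * y = y * x) (hnn' : n * star n ∈ D)
include habel hnn'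

theorem IsNormalizer.coe_weylMap (hφ : evalD D φ (star n * n) ≠ 0) :
    (hn.weylMap φ : WeakDual ℂ D) = hn.weylFunctional φ := by
  rw [IsNormalizer.weylMap, dif_pos (hn.weylFunctional_mem_characterSpace habel hnn' hφ)]

theorem IsNormalizer.evalD_weylMap (hφ : evalD D φ (star n * n) ≠ 0) {g : A} (hg : g ∈ D) :
    evalD D (hn.weylMap φ) g = (evalD D φ (star n * n))⁻¹ * evalD D φ (star n * g * n) := by
  rw [evalD_of_mem _ hg, ← CharacterSpace.coe_coe, hn.coe_weylMap habel hnn' hφ,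
    hn.weylFunctional_apply]


theorem IsNormalizer.evalD_weylMap_mul_star (hφ : evalD D φ (star n * n) ≠ 0) :
    evalD D (hn.weylMap φ) (n * star n) = evalD D φ (star n * n) := by
  have hnn : star n * n ∈ D := mem_of_evalD_ne_zero hφ
  rw [hn.evalD_weylMap habel hnn' hφ hnn',
    show star n * (n * star n) * n = star n * n * (star n * n) by simp only [mul_assoc],
    evalD_mul hnn hnn, inv_mul_cancel_left₀ hφ]

theorem IsNormalizer.weylMap_star_weylMap (hφ : evalD D φ (star n * n) ≠ 0) :
    (isNormalizer_star hn).weylMap (hn.weylMap φ) = φ := by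
  have hnn : star n * n ∈ D := mem_of_evalD_ne_zero hφ
  have hψ := hn.evalD_weylMap_mul_star habel hnn' hφ
  refine characterSpace_ext_evalD fun g hg => ?_
  rw [(isNormalizer_star hn).evalD_weylMap habel (by rwa [star_star]) (by rwa [star_star, hψ]) hg]
  simp only [star_star]
  rw [hψ, hn.evalD_weylMap habel hnn' hφ (hn g hg).1,
    show star n * (n * g * star n) * n = star n * n * g * (star n * n) by simp only [mul_assoc],
    evalD_mul_mul hnn hg hnn]
  field_simp

theorem IsNormalizer.continuousOn_weylMap : ContinuousOn hn.weylMap (suppo D (star n * n)) := by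
  rw [Topology.IsInducing.subtypeVal.continuousOn_iff]
  refine ContinuousOn.congr (f := hn.weylFunctional) ?_ fun φ hφ => hn.coe_weylMap habel hnn' hφ
  rw [continuousOn_iff_continuous_domRestrict]
  refine WeakDual.continuous_of_continuous_eval fun g => ?_
  simp only [Set.domRestrict_apply, hn.weylFunctional_apply]
  exact (((continuous_evalD _).comp continuous_subtype_val).inv₀ fun φ => φ.2).mul
    ((continuous_evalD _).comp continuous_subtype_val)

noncomputable def IsNormalizer.weylHomeo (hnn : star n * n ∈ D) :
    PartialHomeomorph (characterSpace ℂ D) (characterSpace ℂ D) where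
  toFun := hn.weylMap
  invFun := (isNormalizer_star hn).weylMap
  source := suppo D (star n * n)
  target := suppo D (n * star n)
  map_source' φ hφ := by
    simpa only [suppo, Set.mem_ofPred_eq, hn.evalD_weylMap_mul_star habel hnn' hφ] using hφ
  map_target' ψ hψ := by
    have h := (isNormalizer_star hn).evalD_weylMap_mul_star habel (by rwa [star_star])
      (by rwa [star_star])
    simp only [star_star] at h
    simpa only [suppo, Set.mem_ofPred_eq, h] using hψ
  left_inv' φ hφ := hn.weylMap_star_weylMap habel hnn' hφ
  right_inv' ψ hψ := by
    rw [hn.weylMap_congr (isNormalizer_star (isNormalizer_star hn)) (star_star n).symm]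
    exact (isNormalizer_star hn).weylMap_star_weylMap habel (by rwa [star_star])
      (by rwa [star_star])
  continuousOn_toFun := hn.continuousOn_weylMap habel hnn'
  continuousOn_invFun := by
    simpa only [star_star] using
      (isNormalizer_star hn).continuousOn_weylMap habel (by rwa [star_star])

theorem IsNormalizer.isWeylHomeo_weylHomeo (hnn : star n * n ∈ D) :
    IsWeylHomeo D n (hn.weylHomeo habel hnn' hnn) := by
  refine ⟨rfl, rfl, fun φ (hφ : evalD D φ _ ≠ 0) g hg => ?_⟩
  change _ * evalD D (hn.weylMap φ) g = _
  rw [hn.evalD_weylMap habel hnn' hφ hg, mul_inv_cancel_left₀ hφ]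

end WeylHomeo

theorem IsWeylHomeo.apply_eq {D : NonUnitalStarSubalgebra ℂ A} {n : A}
    {α β : PartialHomeomorph (characterSpace ℂ D) (characterSpace ℂ D)}
    (hα : IsWeylHomeo D n α) (hβ : IsWeylHomeo D n β) {ψ : characterSpace ℂ D}
    (hψ : ψ ∈ suppo D (star n * n)) : α ψ = β ψ :=
  characterSpace_ext_evalD fun g hg => mul_left_cancel₀ hψ <|
    (hα.2.2 ψ (hα.1 ▸ hψ) g hg).trans (hβ.2.2 ψ (hβ.1 ▸ hψ) g hg).symm

def WeylAgreeOn (D : NonUnitalStarSubalgebra ℂ A) (n m : A) (U : Set (characterSpace ℂ D)) :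
    Prop :=
  U ⊆ suppo D (star n * n) ∩ suppo D (star m * m) ∧
    ∃ αn αm : PartialHomeomorph (characterSpace ℂ D) (characterSpace ℂ D),
      IsWeylHomeo D n αn ∧ IsWeylHomeo D m αm ∧ Set.EqOn ⇑αn ⇑αm U

namespace WeylAgreeOn

variable {D : NonUnitalStarSubalgebra ℂ A} {n m k : A} {U V : Set (characterSpace ℂ D)}
  {ψ : characterSpace ℂ D}

theorem symm (h : WeylAgreeOn D n m U) : WeylAgreeOn D m n U := by
  obtain ⟨hU, αn, αm, hαn, hαm, heq⟩ := h
  exact ⟨fun ψ hψ => (hU hψ).symm, αm, αn, hαm, hαn, heq.symm⟩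

theorem trans (h₁ : WeylAgreeOn D n m U) (h₂ : WeylAgreeOn D m k V) :
    WeylAgreeOn D n k (U ∩ V) := by
  obtain ⟨hU, αn, αm, hαn, hαm, heq₁⟩ := h₁
  obtain ⟨hV, αm', αk, hαm', hαk, heq₂⟩ := h₂
  refine ⟨fun ψ hψ => ⟨(hU hψ.1).1, (hV hψ.2).2⟩, αn, αk, hαn, hαk, fun ψ hψ => ?_⟩
  rw [heq₁ hψ.1, hαm.apply_eq hαm' (hU hψ.1).2, heq₂ hψ.2]

theorem evalD_conj (h : WeylAgreeOn D n m U) (hψ : ψ ∈ U) {g : A} (hg : g ∈ D) :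
    evalD D ψ (star m * m) * evalD D ψ (star n * g * n)
      = evalD D ψ (star n * n) * evalD D ψ (star m * g * m) := by
  obtain ⟨hU, αn, αm, hαn, hαm, heq⟩ := h
  have hn := hαn.2.2 ψ (hαn.1 ▸ (hU hψ).1) g hg
  have hm := hαm.2.2 ψ (hαm.1 ▸ (hU hψ).2) g hg
  rw [heq hψ] at hn
  rw [← hn, ← hm]
  ring

theorem evalD_conj_conj (h : WeylAgreeOn D n m U) (hn : IsNormalizer D n) (hψ : ψ ∈ U) {g : A}
    (hg : g ∈ D) :
    evalD D ψ (star m * (n * g * star n) * m)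
      = evalD D ψ (star m * m) * evalD D ψ (star n * n) * evalD D ψ g := by
  have hψn : evalD D ψ (star n * n) ≠ 0 := (h.1 hψ).1
  have hnn : star n * n ∈ D := mem_of_evalD_ne_zero hψn
  have key := h.evalD_conj hψ (hn g hg).1
  rw [show star n * (n * g * star n) * n = star n * n * g * (star n * n) by
    simp only [mul_assoc], evalD_mul_mul hnn hg hnn] at key
  apply mul_left_cancel₀ hψn
  linear_combination -key

end WeylAgreeOn

theorem weylAgreeOn_self {D : NonUnitalStarSubalgebra ℂ A} {n : A}
    (habel : ∀ x ∈ D, ∀ y ∈ D, x * y = y * x) (hn : IsNormalizer D n) (hnn : star n * n ∈ D)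
    (hnn' : n * star n ∈ D) : WeylAgreeOn D n n (suppo D (star n * n)) :=
  ⟨fun _ hψ => ⟨hψ, hψ⟩, _, _, hn.isWeylHomeo_weylHomeo habel hnn' hnn,
    hn.isWeylHomeo_weylHomeo habel hnn' hnn, Set.eqOn_refl _ _⟩

section Commutant

variable {D : NonUnitalStarSubalgebra ℂ A} (hcl : IsClosed (D : Set A))
  (habel : ∀ x ∈ D, ∀ y ∈ D, x * y = y * x)
include hcl habel

theorem mem_commutantSet_of_evalD_conj {z : A} (hz : ∀ g ∈ D, star z * g * z ∈ D)
    (hzz : star z * z ∈ D)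
    (h : ∀ ψ : characterSpace ℂ D, ∀ g ∈ D,
      evalD D ψ (star z * g * z) = evalD D ψ (star z * z) * evalD D ψ g) :
    z ∈ commutantSet D := by
  intro d hd
  set y := z * d - d * z
  have hexp : star y * y = (star d * (star z * z) * d - star d * (star z * d * z))
      - (star z * star d * z * d - star z * (star d * d) * z) := by
    simp only [y, star_sub, star_mul, sub_mul, mul_sub, mul_assoc]
    abel
  have h₁ := mul_mem (mul_mem (star_mem hd) hzz) hd
  have h₂ := mul_mem (star_mem hd) (hz d hd)
  have h₃ := mul_mem (hz _ (star_mem hd)) hd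
  have h₄ := hz _ (mul_mem (star_mem hd) hd)
  -- every character kills `star y * y ∈ D`, so `‖y‖² = ‖star y * y‖ = 0`
  have hy : star y * y = 0 := by
    refine eq_zero_of_forall_evalD_eq_zero hcl habel
      (hexp ▸ sub_mem (sub_mem h₁ h₂) (sub_mem h₃ h₄)) fun ψ => ?_
    rw [hexp, evalD_sub (sub_mem h₁ h₂) (sub_mem h₃ h₄), evalD_sub h₁ h₂, evalD_sub h₃ h₄,
      evalD_mul_mul (star_mem hd) hzz hd, evalD_mul (star_mem hd) (hz d hd), h ψ d hd,
      evalD_mul (hz _ (star_mem hd)) hd, h ψ _ (star_mem hd), h ψ _ (mul_mem (star_mem hd) hd),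
      evalD_mul (star_mem hd) hd]
    ring
  exact sub_eq_zero.1 (CStarRing.star_mul_self_eq_zero_iff _ |>.1 hy)

theorem WeylAgreeOn.mul_star_mul_mem_commutantSet {n m d : A} {U : Set (characterSpace ℂ D)}
    (h : WeylAgreeOn D n m U) (hn : IsNormalizer D n) (hm : IsNormalizer D m) (hd : d ∈ D)
    (hdU : suppo D d ⊆ U) : d * (star n * m) * d ∈ commutantSet D := by
  set T : A → A := fun g => star m * (n * g * star n) * m
  have hT : ∀ g ∈ D, T g ∈ D := fun g hg => (hm _ (hn g hg).1).2
  have hconj : ∀ g, star (d * (star n * m) * d) * g * (d * (star n * m) * d)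
      = star d * T (star d * g * d) * d := fun g => by
    simp only [T, star_mul, star_star, mul_assoc]
  have hself : star (d * (star n * m) * d) * (d * (star n * m) * d)
      = star d * T (star d * d) * d := by
    simp only [T, star_mul, star_star, mul_assoc]
  have hmem : ∀ g ∈ D, star d * T g * d ∈ D := fun g hg =>
    mul_mem (mul_mem (star_mem hd) (hT g hg)) hd
  have hval : ∀ ψ, ∀ g ∈ D, evalD D ψ (star d * T g * d) = evalD D ψ (star d) * evalD D ψ d
      * (evalD D ψ (star m * m) * evalD D ψ (star n * n)) * evalD D ψ g := fun ψ g hg => by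
    rw [evalD_mul_mul (star_mem hd) (hT g hg) hd]
    by_cases hψ : evalD D ψ d = 0
    · simp only [hψ, mul_zero, zero_mul]
    · rw [h.evalD_conj_conj hn (hdU hψ) hg]
      ring
  refine mem_commutantSet_of_evalD_conj hcl habel (fun g hg => hconj g ▸ hmem _ ?_)
    (hself ▸ hmem _ (mul_mem (star_mem hd) hd)) fun ψ g hg => ?_
  · exact mul_mem (mul_mem (star_mem hd) hg) hd
  · rw [hconj, hself, hval ψ _ (mul_mem (mul_mem (star_mem hd) hg) hd),
      hval ψ _ (mul_mem (star_mem hd) hd), evalD_mul_mul (star_mem hd) hg hd,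
      evalD_mul (star_mem hd) hd]
    ring

end Commutant

noncomputable def weylElem (D : NonUnitalStarSubalgebra ℂ A) (n m : A) (φ : characterSpace ℂ D)
    (d : A) : A :=
  (evalD D φ (star m * m) ^ (-(1/2) : ℂ) * evalD D φ (star n * n) ^ (-(1/2) : ℂ)) •
    (d * (star n * m) * d)

theorem cpow_neg_half_mul_cpow_neg_half_mul_self {z : ℂ} (hz : z ≠ 0) :
    z ^ (-(1/2) : ℂ) * z ^ (-(1/2) : ℂ) * z = 1 := by
  rw [← Complex.cpow_add _ _ hz, show -(1/2 : ℂ) + -(1/2) = -1 by norm_num, Complex.cpow_neg_one,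
    inv_mul_cancel₀ hz]

section WeylElem

variable {D : NonUnitalStarSubalgebra ℂ A} {φ : characterSpace ℂ D} {n m k d w : A}

theorem weylRep_iff : WeylRep D n m φ w ↔ ∃ U, IsOpen U ∧ WeylAgreeOn D n m U ∧
    ∃ d ∈ D, suppo D d ⊆ U ∧ evalD D φ d = 1 ∧ w = weylElem D n m φ d := by
  constructor
  · rintro ⟨U, hU, -, hsub, hα, d, hd, hdU, hd1, rfl⟩
    exact ⟨U, hU, ⟨hsub, hα⟩, d, hd, hdU, hd1, rfl⟩
  · rintro ⟨U, hU, ⟨hsub, hα⟩, d, hd, hdU, hd1, rfl⟩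
    exact ⟨U, hU, hdU (show evalD D φ d ≠ 0 from hd1 ▸ one_ne_zero), hsub, hα, d, hd, hdU, hd1, rfl⟩

theorem weylElem_self_mem (hd : d ∈ D) (hnn : star n * n ∈ D) : weylElem D n n φ d ∈ D :=
  SMulMemClass.smul_mem _ (mul_mem (mul_mem hd hnn) hd)

theorem WeylAgreeOn.weylElem_mem_commutantSet (hcl : IsClosed (D : Set A))
    (habel : ∀ x ∈ D, ∀ y ∈ D, x * y = y * x) {U : Set (characterSpace ℂ D)}
    (h : WeylAgreeOn D n m U) (hn : IsNormalizer D n) (hm : IsNormalizer D m) (hd : d ∈ D)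
    (hdU : suppo D d ⊆ U) : weylElem D n m φ d ∈ commutantSet D :=
  SMulMemClass.smul_mem (s := commutantAlg D) _
    (h.mul_star_mul_mem_commutantSet hcl habel hn hm hd hdU)

end WeylElem

theorem le_commutantAlg {D : NonUnitalStarSubalgebra ℂ A}
    (habel : ∀ x ∈ D, ∀ y ∈ D, x * y = y * x) : D ≤ commutantAlg D :=
  fun a ha d hd => habel a ha d hd

theorem mul_mem_Jset {D : NonUnitalStarSubalgebra ℂ A} {φ : characterSpace ℂ D} {k a : A}
    (hk : k ∈ D) (hφk : evalD D φ k = 0) (ha : a ∈ commutantSet D) : k * a ∈ Jset D φ :=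
  subset_closure (Submodule.subset_span ⟨k, hk, a, ha, hφk, rfl⟩)

theorem IsWeaklyCartan.exists_mem_isUnitModJ {D : NonUnitalStarSubalgebra ℂ A}
    (hD : IsWeaklyCartan D) (φ : characterSpace ℂ D) : ∃ e ∈ D, IsUnitModJ D φ e := by
  obtain ⟨e, he, U, -, hφU, hU⟩ := hD.2.2.2.2 φ
  exact ⟨e, he, hU φ hφU⟩

theorem star_mul_self_mul_weylElem_mul_weylElem {D : NonUnitalStarSubalgebra ℂ A}
    {φ : characterSpace ℂ D} {n m k d₁ d₂ : A} (habel : ∀ x ∈ D, ∀ y ∈ D, x * y = y * x)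
    (hn : IsNormalizer D n) (hm : IsNormalizer D m) (hd₁ : d₁ ∈ D) (hd₂ : d₂ ∈ D) :
    (evalD D φ (star m * m) ^ (-(1/2) : ℂ) * evalD D φ (star m * m) ^ (-(1/2) : ℂ)) •
      (star n * (m * (d₁ * d₂) * star m) * n * weylElem D n k φ (d₁ * d₂))
      = star n * n * (d₂ * (weylElem D n m φ d₁ * weylElem D m k φ d₂) * d₁) := by
  set h₀ := m * (d₁ * d₂) * star m
  have hcomm : h₀ * (n * (d₁ * d₂) * star n) = n * (d₁ * d₂) * star n * h₀ :=
    habel _ (hm _ (mul_mem hd₁ hd₂)).1 _ (hn _ (mul_mem hd₁ hd₂)).1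
  have h₂₁ : d₂ * d₁ = d₁ * d₂ := habel _ hd₂ _ hd₁
  have hprod : star n * h₀ * n * ((d₁ * d₂) * (star n * k) * (d₁ * d₂))
      = star n * n * (d₂ * (d₁ * (star n * m) * d₁ * (d₂ * (star m * k) * d₂)) * d₁) :=
    calc _ = star n * (h₀ * (n * (d₁ * d₂) * star n)) * k * (d₁ * d₂) := by
          simp only [mul_assoc]
      _ = star n * n * (d₂ * d₁) * star n * m * (d₁ * d₂) * star m * k * (d₂ * d₁) := by
          rw [hcomm, h₂₁]; simp only [h₀, mul_assoc]
      _ = _ := by simp only [mul_assoc]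
  simp only [weylElem, smul_mul_assoc, mul_smul_comm, smul_smul, hprod]
  congr 1
  ring

section Quotient

variable {D : NonUnitalStarSubalgebra ℂ A} {φ : characterSpace ℂ D}
  {Q : Type*} [Ring Q] [Star Q] [Algebra ℂ Q] {π : commutantAlg D →⋆ₙₐ[ℂ] Q}
  (habel : ∀ x ∈ D, ∀ y ∈ D, x * y = y * x) {e : A} (he : e ∈ D) (heu : IsUnitModJ D φ e)
  (hπ : Function.Surjective π) (hJ : ∀ a : commutantAlg D, (a : A) ∈ Jset D φ → π a = 0)
include habel he heu hπ hJ

theorem map_eq_evalD_smul_one {d : A} (hd : d ∈ D) (hd1 : evalD D φ d = 1)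
    (w : commutantAlg D) (hw : (w : A) ∈ D) : π w = evalD D φ w • 1 := by
  have hD := le_commutantAlg habel
  have hsub : ∀ a b : commutantAlg D, (a : A) - b ∈ Jset D φ → π a = π b := fun a b h =>
    sub_eq_zero.1 (by rw [← map_sub]; exact hJ _ h)
  let E : commutantAlg D := ⟨e, hD he⟩
  let Dd : commutantAlg D := ⟨d, hD hd⟩
  have hE : π E = 1 := by
    obtain ⟨a, ha⟩ := hπ 1
    simpa only [map_mul, ha, mul_one] using hsub (E * a) a (heu.2 a a.2).1
  have hscal : ∀ z (hz : z ∈ D), π ⟨z, hD hz⟩ = evalD D φ z • π Dd := fun z hz => by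
    have hJz : z * e - evalD D φ z • (d * e) ∈ Jset D φ := by
      rw [← smul_mul_assoc, ← sub_mul]
      refine mul_mem_Jset (sub_mem hz (SMulMemClass.smul_mem _ hd)) ?_ heu.1
      rw [evalD_sub hz (SMulMemClass.smul_mem _ hd), evalD_smul _ hd, hd1, mul_one, sub_self]
    simpa only [map_mul, map_smul, hE, mul_one] using
      hsub (⟨z, hD hz⟩ * E) (evalD D φ z • (Dd * E)) hJz
  have hDd : π Dd = 1 := by
    have h₁ : evalD D φ e • π Dd = 1 := (hscal e he).symm.trans hE
    have h₂ : π Dd * π Dd = π Dd := by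
      rw [← map_mul, show Dd * Dd = ⟨d * d, hD (mul_mem hd hd)⟩ from rfl, hscal _ (mul_mem hd hd),
        evalD_mul hd hd, hd1, one_mul, one_smul]
    calc π Dd = π Dd * (evalD D φ e • π Dd) := by rw [h₁, mul_one]
      _ = 1 := by rw [mul_smul_comm, h₂, h₁]
  exact (hscal _ hw).trans (by rw [hDd])

theorem map_weylElem_self {n d : A} (hd : d ∈ D) (hd1 : evalD D φ d = 1)
    (hφ : evalD D φ (star n * n) ≠ 0) (w : commutantAlg D) (hw : (w : A) = weylElem D n n φ d) :
    π w = 1 := by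
  have hnn : star n * n ∈ D := mem_of_evalD_ne_zero hφ
  rw [map_eq_evalD_smul_one habel he heu hπ hJ hd hd1 w (hw ▸ weylElem_self_mem hd hnn), hw,
    weylElem, evalD_smul _ (mul_mem (mul_mem hd hnn) hd), evalD_mul_mul hd hnn hd, hd1, one_mul,
    mul_one, cpow_neg_half_mul_cpow_neg_half_mul_self hφ, one_smul]

theorem map_weylElem_mul {n m k d₁ d₂ : A} {U : Set (characterSpace ℂ D)}
    (hagree : WeylAgreeOn D n m U) (hφU : φ ∈ U) (hn : IsNormalizer D n) (hm : IsNormalizer D m)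
    (hd₁ : d₁ ∈ D) (hd₂ : d₂ ∈ D) (hd₁1 : evalD D φ d₁ = 1) (hd₂1 : evalD D φ d₂ = 1)
    (w₁ w₂ w₃ : commutantAlg D) (hw₁ : (w₁ : A) = weylElem D n m φ d₁)
    (hw₂ : (w₂ : A) = weylElem D m k φ d₂) (hw₃ : (w₃ : A) = weylElem D n k φ (d₁ * d₂)) :
    π w₃ = π w₁ * π w₂ := by
  have hD := le_commutantAlg habel
  obtain ⟨hφn, hφm⟩ := hagree.1 hφU
  have hd : d₁ * d₂ ∈ D := mul_mem hd₁ hd₂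
  have hN : star n * (m * (d₁ * d₂) * star m) * n ∈ D := (hn _ (hm _ hd).1).2
  have hN1 := hagree.symm.evalD_conj_conj hm hφU hd
  rw [evalD_mul hd₁ hd₂, hd₁1, hd₂1, mul_one, mul_one] at hN1
  have key : (evalD D φ (star m * m) ^ (-(1/2) : ℂ) * evalD D φ (star m * m) ^ (-(1/2) : ℂ)) •
      (⟨_, hD hN⟩ * w₃ : commutantAlg D)
        = ⟨_, hD (mem_of_evalD_ne_zero hφn)⟩ * (⟨d₂, hD hd₂⟩ * (w₁ * w₂) * ⟨d₁, hD hd₁⟩) :=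
    Subtype.ext <| by
      change _ • (_ * (w₃ : A)) = _ * (_ * ((w₁ : A) * w₂) * _)
      rw [hw₁, hw₂, hw₃]
      exact star_mul_self_mul_weylElem_mul_weylElem habel hn hm hd₁ hd₂
  have hπD : ∀ z (hz : z ∈ D), π ⟨z, hD hz⟩ = evalD D φ z • 1 := fun z hz =>
    map_eq_evalD_smul_one habel he heu hπ hJ hd₁ hd₁1 _ hz
  apply_fun π at key
  simp only [map_smul, map_mul] at key
  rw [hπD _ hN, hπD _ (mem_of_evalD_ne_zero hφn), hπD _ hd₁, hπD _ hd₂, hN1, hd₁1, hd₂1] at key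
  simp only [one_smul, mul_one, one_mul, smul_mul_assoc, smul_smul] at key
  rw [show _ * _ * (evalD D φ (star n * n) * evalD D φ (star m * m)) = evalD D φ (star n * n) by
    linear_combination evalD D φ (star n * n) * cpow_neg_half_mul_cpow_neg_half_mul_self hφm] at key
  exact smul_right_injective Q hφn key

end Quotient

section Relation

variable {D : NonUnitalStarSubalgebra ℂ A} {φ ψ ρ : characterSpace ℂ D} {n m k : A}

theorem inU0_self (hD : IsWeaklyCartan D) (hn : IsNormalizer D n)
    (hφ : φ ∈ suppo D (star n * n)) : InU0 D n n φ := by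
  intro Q _ _ _ _ _ _ π hπ hker
  obtain ⟨e, he, heu⟩ := hD.exists_mem_isUnitModJ φ
  obtain ⟨hcl, habel, hau, -, -⟩ := hD
  have hnn : star n * n ∈ D := mem_of_evalD_ne_zero hφ
  set d := (evalD D φ (star n * n))⁻¹ • (star n * n)
  have hd : d ∈ D := SMulMemClass.smul_mem _ hnn
  have hd1 : evalD D φ d = 1 := by rw [evalD_smul _ hnn]; exact inv_mul_cancel₀ hφ
  have hdU : suppo D d ⊆ suppo D (star n * n) := fun ψ (hψ : evalD D ψ d ≠ 0) h0 =>
    hψ (by rw [evalD_smul _ hnn, h0, mul_zero])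
  have hagree := weylAgreeOn_self habel hn hnn (hn.mul_star_mem hcl hau)
  let w : commutantAlg D :=
    ⟨weylElem D n n φ d, hagree.weylElem_mem_commutantSet hcl habel hn hn hd hdU⟩
  have hw : π w = 1 :=
    map_weylElem_self habel he heu hπ (fun a ha => (hker a).2 ha) hd hd1 hφ w rfl
  refine ⟨w, weylRep_iff.2 ⟨_, isOpen_suppo _, hagree, d, hd, hdU, hd1, rfl⟩, hw ▸ one_mem _, ?_⟩
  convert mem_connectedComponent using 1
  exact Subtype.ext hw

theorem InU0.symm (hD : IsWeaklyCartan D) (hn : IsNormalizer D n) (hm : IsNormalizer D m)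
    (h : InU0 D n m φ) : InU0 D m n φ := by
  intro Q _ _ _ _ _ _ π hπ hker
  obtain ⟨e, he, heu⟩ := hD.exists_mem_isUnitModJ φ
  obtain ⟨hcl, habel, -, -, -⟩ := hD
  obtain ⟨w, hw, hu, hwc⟩ := h Q π hπ hker
  obtain ⟨U, hU, hagree, d, hd, hdU, hd1, hwd⟩ := weylRep_iff.1 hw
  have hφU : φ ∈ U := hdU (show evalD D φ d ≠ 0 from hd1 ▸ one_ne_zero)
  have hmm : star m * m ∈ D := mem_of_evalD_ne_zero (hagree.1 hφU).2
  let w' : commutantAlg D :=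
    ⟨weylElem D m n φ d, hagree.symm.weylElem_mem_commutantSet hcl habel hm hn hd hdU⟩
  let w₀ : commutantAlg D :=
    ⟨weylElem D m m φ (d * d), le_commutantAlg habel (weylElem_self_mem (mul_mem hd hd) hmm)⟩
  have hJ : ∀ a : commutantAlg D, (a : A) ∈ Jset D φ → π a = 0 := fun a ha => (hker a).2 ha
  have hdd1 : evalD D φ (d * d) = 1 := by rw [evalD_mul hd hd, hd1, one_mul]
  have hinv : π w' * π w = 1 := by
    rw [← map_weylElem_mul habel he heu hπ hJ hagree.symm hφU hm hn hd hd hd1 hd1 w' w w₀ rfl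
      hwd rfl]
    exact map_weylElem_self habel he heu hπ hJ (mul_mem hd hd) hdd1 (hagree.1 hφU).2 w₀ rfl
  have hw' : π w' = star (π w) := by
    rw [← one_mul (star (π w)), ← hinv, mul_assoc, Unitary.mul_star_self_of_mem hu, mul_one]
  refine ⟨w', weylRep_iff.2 ⟨U, hU, hagree.symm, d, hd, hdU, hd1, rfl⟩,
    hw' ▸ Unitary.star_mem hu, ?_⟩
  convert inv_mem_connectedComponent_one hwc using 1
  exact Subtype.ext hw'

theorem InU0.trans (hD : IsWeaklyCartan D) (hn : IsNormalizer D n) (hm : IsNormalizer D m)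
    (hk : IsNormalizer D k) (h₁ : InU0 D n m φ) (h₂ : InU0 D m k φ) : InU0 D n k φ := by
  intro Q _ _ _ _ _ _ π hπ hker
  obtain ⟨e, he, heu⟩ := hD.exists_mem_isUnitModJ φ
  obtain ⟨hcl, habel, -, -, -⟩ := hD
  obtain ⟨w₁, hw₁, hu₁, hwc₁⟩ := h₁ Q π hπ hker
  obtain ⟨w₂, hw₂, hu₂, hwc₂⟩ := h₂ Q π hπ hker
  obtain ⟨U₁, hU₁, hagree₁, d₁, hd₁, hd₁U, hd₁1, hwd₁⟩ := weylRep_iff.1 hw₁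
  obtain ⟨U₂, hU₂, hagree₂, d₂, hd₂, hd₂U, hd₂1, hwd₂⟩ := weylRep_iff.1 hw₂
  have hagree := hagree₁.trans hagree₂
  have hdU : suppo D (d₁ * d₂) ⊆ U₁ ∩ U₂ :=
    (suppo_mul_subset hd₁ hd₂).trans (Set.inter_subset_inter hd₁U hd₂U)
  have hd1 : evalD D φ (d₁ * d₂) = 1 := by rw [evalD_mul hd₁ hd₂, hd₁1, hd₂1, one_mul]
  let w₃ : commutantAlg D :=
    ⟨weylElem D n k φ (d₁ * d₂),
      hagree.weylElem_mem_commutantSet hcl habel hn hk (mul_mem hd₁ hd₂) hdU⟩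
  have hw₃ : π w₃ = π w₁ * π w₂ :=
    map_weylElem_mul habel he heu hπ (fun a ha => (hker a).2 ha) hagree₁
      (hd₁U (show evalD D φ d₁ ≠ 0 from hd₁1 ▸ one_ne_zero)) hn hm hd₁ hd₂ hd₁1 hd₂1 w₁ w₂ w₃
      hwd₁ hwd₂ rfl
  refine ⟨w₃, weylRep_iff.2 ⟨_, hU₁.inter hU₂, hagree, _, mul_mem hd₁ hd₂, hdU, hd1, rfl⟩,
    hw₃ ▸ mul_mem hu₁ hu₂, ?_⟩
  convert mul_mem_connectedComponent_one hwc₁ hwc₂ using 1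
  exact Subtype.ext hw₃

theorem weylSimRaw_refl (hD : IsWeaklyCartan D) (hn : IsNormalizer D n)
    (hφ : φ ∈ suppo D (star n * n)) : WeylSimRaw D n φ n φ :=
  ⟨rfl, ⟨_, isOpen_suppo _, hφ,
    weylAgreeOn_self hD.2.1 hn (mem_of_evalD_ne_zero hφ) (hn.mul_star_mem hD.1 hD.2.2.1)⟩,
    inU0_self hD hn hφ⟩

theorem WeylSimRaw.symm (hD : IsWeaklyCartan D) (hn : IsNormalizer D n) (hm : IsNormalizer D m)
    (h : WeylSimRaw D n φ m ψ) : WeylSimRaw D m ψ n φ := by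
  obtain ⟨rfl, ⟨U, hU, hφU, hagree⟩, hu⟩ := h
  exact ⟨rfl, ⟨U, hU, hφU, WeylAgreeOn.symm hagree⟩, hu.symm hD hn hm⟩

theorem WeylSimRaw.trans (hD : IsWeaklyCartan D) (hn : IsNormalizer D n)
    (hm : IsNormalizer D m) (hk : IsNormalizer D k) (h₁ : WeylSimRaw D n φ m ψ)
    (h₂ : WeylSimRaw D m ψ k ρ) : WeylSimRaw D n φ k ρ := by
  obtain ⟨rfl, ⟨U, hU, hφU, hagree₁⟩, hu₁⟩ := h₁
  obtain ⟨rfl, ⟨V, hV, hφV, hagree₂⟩, hu₂⟩ := h₂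
  exact ⟨rfl, ⟨U ∩ V, hU.inter hV, ⟨hφU, hφV⟩, WeylAgreeOn.trans hagree₁ hagree₂⟩,
    hu₁.trans hD hn hm hk hu₂⟩

end Relation

theorem statement_8_general
    (D : NonUnitalStarSubalgebra ℂ A) (hD : IsWeaklyCartan D) :
    Equivalence (fun p q : WeylPair D => WeylSimRaw D p.1.1 p.1.2 q.1.1 q.1.2) := by
  refine ⟨fun p => ?_, fun {p q} h => ?_, fun {p q r} h₁ h₂ => ?_⟩
  · exact weylSimRaw_refl hD p.2.1 p.2.2
  · exact WeylSimRaw.symm hD p.2.1 q.2.1 h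
  · exact WeylSimRaw.trans hD p.2.1 q.2.1 r.2.1 h₁ h₂

theorem statement_8 [TopologicalSpace.SeparableSpace A]
    (D : NonUnitalStarSubalgebra ℂ A) (hD : IsWeaklyCartan D) :
    Equivalence (fun p q : WeylPair D => WeylSimRaw D p.1.1 p.1.2 q.1.1 q.1.2) :=
  statement_8_general D hD
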